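/- arXiv:1711.09056 — 2 statements merged into one kernel-verified Lean document; each statement's English description precedes it below -/
import Mathlib

section
/- Let d ≥ 1 and n be natural numbers. Suppose Δ : Fin n → MvPolynomial (Fin n) ℂ is a tuple of polynomials each with zero constant coefficient such that the n×n matrix of linear coefficients (whose (i,j) entry is the coefficient of X_j in Δ i) is invertible. Then there exists a tuple Δ' : Fin n → MvPolynomial (Fin n) ℂ, each component with zero constant coefficient, such that for every i, both aeval Δ' (Δ i) - X_i and aeval Δ (Δ' i) - X_i lie in m_n^(d+1), where m_n is the ideal generated by the variables. In other words, every d-jet with invertible linear part has a compositional inverse modulo terms of degree greater than d, so that Diff_d^n = {Δ ∈ J_d^{n,n} : Lin Δ invertible} is a group under truncated composition. -/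
open MvPolynomial

/-- The ideal of `MvPolynomial (Fin n) ℂ` generated by the variables. -/
noncomputable def varIdeal (n : ℕ) : Ideal (MvPolynomial (Fin n) ℂ) :=
  Ideal.span (Set.range (X : Fin n → MvPolynomial (Fin n) ℂ))

/-- The linear part of a jet: the matrix whose `(i, j)` entry is the coefficient of
`X j` in the `i`-th component. -/
noncomputable def linearPart {n k : ℕ} (Ψ : Fin k → MvPolynomial (Fin n) ℂ) :
    Matrix (Fin k) (Fin n) ℂ :=
  Matrix.of fun i j => coeff (Finsupp.single j 1) (Ψ i)

/-!
Write `Δ = A X + N` with `A` invertible and `N` of order at least two. A right inverse of `Δ`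
is a fixed point of `Φ ↦ A⁻¹ (X - N ∘ Φ)`. Since `N` has order two, this map raises the order to
which two substitutions without constant term agree by one, so its `(d + 1)`-st iterate of `0` is
a right inverse modulo `𝔪 ^ (d + 1)`, with linear part `A⁻¹`. Hence it has a right inverse of its
own, and in the monoid of substitutions acting on `MvPolynomial σ R ⧸ 𝔪 ^ (d + 1)` an element
with a left and a right inverse is invertible: the right inverse of `Δ` is two-sided.
-/

open Matrix

theorem Matrix.mulVec_apply_mem {ι κ R : Type*} [Semiring R] [Fintype κ] {I : Ideal R}
    (M : Matrix ι κ R) {v : κ → R} (hv : ∀ j, v j ∈ I) (i : ι) : (M *ᵥ v) i ∈ I :=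
  Ideal.sum_mem _ fun j _ => I.mul_mem_left _ (hv j)

namespace MvPolynomial

section Substitution

variable {σ R S : Type*} [CommSemiring R] [CommSemiring S] [Algebra R S]

theorem mem_idealOfVars_iff {p : MvPolynomial σ R} :
    p ∈ idealOfVars σ R ↔ constantCoeff p = 0 := by
  rw [← pow_one (idealOfVars σ R), mem_pow_idealOfVars_iff']
  simp [Finsupp.degree_eq_zero_iff, constantCoeff_eq]

theorem idealOfVars_le_comap_aeval {I : Ideal S} {Φ : σ → S} (hΦ : ∀ i, Φ i ∈ I) :
    idealOfVars σ R ≤ I.comap (aeval Φ) := by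
  rw [← Ideal.map_le_iff_le_comap, idealOfVars, Ideal.map_span, Ideal.span_le]
  rintro _ ⟨_, ⟨i, rfl⟩, rfl⟩
  simpa using hΦ i

theorem pow_idealOfVars_le_comap_aeval {I : Ideal S} {Φ : σ → S} (hΦ : ∀ i, Φ i ∈ I) (k : ℕ) :
    idealOfVars σ R ^ k ≤ (I ^ k).comap (aeval Φ) := by
  rw [← Ideal.map_le_iff_le_comap, Ideal.map_pow]
  exact Ideal.pow_right_mono (Ideal.map_le_iff_le_comap.mpr (idealOfVars_le_comap_aeval hΦ)) k

theorem aeval_mulVec_map_C [Fintype σ] (A : Matrix σ σ R) (Φ v : σ → MvPolynomial σ R) (i : σ) :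
    aeval Φ ((A.map C *ᵥ v) i) = (A.map C *ᵥ fun j => aeval Φ (v j)) i := by
  simp [mulVec, dotProduct]

end Substitution

section Congruence

variable {σ R S : Type*} [CommSemiring R] [CommRing S] [Algebra R S]

theorem aeval_sub_aeval_mem {J : Ideal S} {Φ Ψ : σ → S} (h : ∀ i, Φ i - Ψ i ∈ J)
    (p : MvPolynomial σ R) : aeval Φ p - aeval Ψ p ∈ J := by
  rw [← Ideal.Quotient.eq, ← Ideal.Quotient.mkₐ_eq_mk R, comp_aeval_apply, comp_aeval_apply]
  congr 2
  funext i
  exact Ideal.Quotient.eq.mpr (h i)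

theorem aeval_sub_aeval_mem_mul {I J : Ideal S} {Φ Ψ : σ → S} (hΦ : ∀ i, Φ i ∈ I)
    (hΨ : ∀ i, Ψ i ∈ I) (h : ∀ i, Φ i - Ψ i ∈ J) {p : MvPolynomial σ R}
    (hp : p ∈ idealOfVars σ R ^ 2) : aeval Φ p - aeval Ψ p ∈ I * J := by
  rw [pow_two] at hp
  refine Submodule.mul_induction_on hp (fun q hq r hr => ?_) (fun x y hx hy => ?_)
  · have hqr : aeval Φ (q * r) - aeval Ψ (q * r)
        = aeval Φ q * (aeval Φ r - aeval Ψ r) + aeval Ψ r * (aeval Φ q - aeval Ψ q) := by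
      simp only [map_mul]
      ring
    rw [hqr]
    exact add_mem (Ideal.mul_mem_mul (idealOfVars_le_comap_aeval hΦ hq) (aeval_sub_aeval_mem h r))
      (Ideal.mul_mem_mul (idealOfVars_le_comap_aeval hΨ hr) (aeval_sub_aeval_mem h q))
  · rw [map_add, map_add, add_sub_add_comm]
    exact add_mem hx hy

end Congruence

section LinearPart

variable {σ R : Type*} [CommRing R] [Fintype σ]

def HasLinearPart (Φ : σ → MvPolynomial σ R) (A : Matrix σ σ R) : Prop :=
  ∀ i, Φ i - (A.map C *ᵥ X) i ∈ idealOfVars σ R ^ 2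

theorem HasLinearPart.mem_idealOfVars {Φ : σ → MvPolynomial σ R} {A : Matrix σ σ R}
    (h : HasLinearPart Φ A) (i : σ) : Φ i ∈ idealOfVars σ R := by
  rw [← sub_add_cancel (Φ i) ((A.map C *ᵥ X) i)]
  exact add_mem (Ideal.pow_le_self two_ne_zero (h i))
    (mulVec_apply_mem _ (fun j => Ideal.subset_span (Set.mem_range_self j)) i)

theorem sub_sum_C_coeff_mul_X_mem_pow_two {p : MvPolynomial σ R} (hp : p ∈ idealOfVars σ R) :
    p - ∑ j, C (coeff (Finsupp.single j 1) p) * X j ∈ idealOfVars σ R ^ 2 := by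
  classical
  obtain ⟨q, rfl⟩ := Ideal.mem_span_range_iff_exists_fun.mp hp
  have hcoeff : ∀ j, coeff (Finsupp.single j 1) (∑ l, q l * X l) = constantCoeff (q j) := by
    intro j
    simp [coeff_sum, coeff_mul_X', constantCoeff_eq]
  simp only [hcoeff, ← Finset.sum_sub_distrib, ← sub_mul, pow_two]
  refine Ideal.sum_mem _ fun l _ => Ideal.mul_mem_mul ?_ (Ideal.subset_span (Set.mem_range_self l))
  simp [mem_idealOfVars_iff]

theorem hasLinearPart_of_forall_mem {Φ : σ → MvPolynomial σ R}
    (hΦ : ∀ i, Φ i ∈ idealOfVars σ R) :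
    HasLinearPart Φ (Matrix.of fun i j => coeff (Finsupp.single j 1) (Φ i)) :=
  fun i => sub_sum_C_coeff_mul_X_mem_pow_two (hΦ i)

end LinearPart

section RightInverse

variable {σ R : Type*} [CommRing R] [Fintype σ]

/-- A right inverse of `A X + N` with `A B = 1` is a fixed point of this map, since
`A Φ + N ∘ Φ = X` reads `Φ = B (X - N ∘ Φ)`. -/
noncomputable def rightInverseStep (B : Matrix σ σ R) (N Φ : σ → MvPolynomial σ R) :
    σ → MvPolynomial σ R :=
  B.map C *ᵥ (X - fun i => aeval Φ (N i))

variable {B : Matrix σ σ R} {N : σ → MvPolynomial σ R}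

theorem hasLinearPart_rightInverseStep (hN : ∀ i, N i ∈ idealOfVars σ R ^ 2)
    {Φ : σ → MvPolynomial σ R} (hΦ : ∀ i, Φ i ∈ idealOfVars σ R) :
    HasLinearPart (rightInverseStep B N Φ) B := by
  intro i
  rw [rightInverseStep, mulVec_sub, Pi.sub_apply, sub_sub_cancel_left]
  exact neg_mem (mulVec_apply_mem _
    (fun j => Ideal.mem_comap.mp (pow_idealOfVars_le_comap_aeval hΦ 2 (hN j))) i)

theorem rightInverseStep_sub_mem (hN : ∀ i, N i ∈ idealOfVars σ R ^ 2)
    {Φ Ψ : σ → MvPolynomial σ R} (hΦ : ∀ i, Φ i ∈ idealOfVars σ R)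
    (hΨ : ∀ i, Ψ i ∈ idealOfVars σ R) {k : ℕ} (h : ∀ i, Φ i - Ψ i ∈ idealOfVars σ R ^ k)
    (i : σ) : rightInverseStep B N Φ i - rightInverseStep B N Ψ i ∈ idealOfVars σ R ^ (k + 1) := by
  rw [← Pi.sub_apply, rightInverseStep, rightInverseStep, ← mulVec_sub, sub_sub_sub_cancel_left]
  refine mulVec_apply_mem _ (fun j => ?_) i
  rw [pow_succ']
  exact aeval_sub_aeval_mem_mul hΨ hΦ (fun l => by simpa using neg_mem (h l)) (hN j)

theorem aeval_sub_X_eq_mulVec_sub_rightInverseStep {A : Matrix σ σ R} [DecidableEq σ]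
    (hAB : A * B = 1) (Φ : σ → MvPolynomial σ R) (i : σ) :
    aeval Φ ((A.map C *ᵥ X) i + N i) - X i = (A.map C *ᵥ (Φ - rightInverseStep B N Φ)) i := by
  rw [map_add, aeval_mulVec_map_C, rightInverseStep, mulVec_sub, mulVec_mulVec, ← Matrix.map_mul,
    hAB, Matrix.map_one _ C_0 C_1, one_mulVec]
  simp only [aeval_X, Pi.sub_apply]
  ring

theorem iterate_rightInverseStep_mem (hN : ∀ i, N i ∈ idealOfVars σ R ^ 2) (k : ℕ) (i : σ) :
    (rightInverseStep B N)^[k] 0 i ∈ idealOfVars σ R := by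
  induction k generalizing i with
  | zero => exact zero_mem _
  | succ k ih =>
    rw [Function.iterate_succ_apply']
    exact (hasLinearPart_rightInverseStep hN ih).mem_idealOfVars i

theorem iterate_succ_rightInverseStep_sub_mem (hN : ∀ i, N i ∈ idealOfVars σ R ^ 2) (k : ℕ)
    (i : σ) : (rightInverseStep B N)^[k + 1] 0 i - (rightInverseStep B N)^[k] 0 i
      ∈ idealOfVars σ R ^ (k + 1) := by
  induction k generalizing i with
  | zero =>
    rw [zero_add, Function.iterate_one, Function.iterate_zero_apply, Pi.zero_apply, sub_zero,
      pow_one]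
    exact (hasLinearPart_rightInverseStep (Φ := 0) hN fun _ => zero_mem _).mem_idealOfVars i
  | succ k ih =>
    have h := rightInverseStep_sub_mem (B := B) hN (iterate_rightInverseStep_mem hN (k + 1))
      (iterate_rightInverseStep_mem hN k) ih i
    rwa [← Function.iterate_succ_apply' (rightInverseStep B N) (k + 1),
      ← Function.iterate_succ_apply' (rightInverseStep B N) k] at h

theorem exists_hasLinearPart_aeval_sub_X_mem {A B : Matrix σ σ R} [DecidableEq σ]
    (hAB : A * B = 1) {Δ : σ → MvPolynomial σ R} (hΔ : HasLinearPart Δ A) (k : ℕ) :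
    ∃ Φ, HasLinearPart Φ B ∧ ∀ i, aeval Φ (Δ i) - X i ∈ idealOfVars σ R ^ (k + 1) := by
  set N : σ → MvPolynomial σ R := fun i => Δ i - (A.map C *ᵥ X) i
  refine ⟨(rightInverseStep B N)^[k + 1] 0, ?_, fun i => ?_⟩
  · rw [Function.iterate_succ_apply']
    exact hasLinearPart_rightInverseStep hΔ (iterate_rightInverseStep_mem hΔ k)
  · have hΔi : Δ i = (A.map C *ᵥ X) i + N i := (add_sub_cancel _ _).symm
    rw [hΔi, aeval_sub_X_eq_mulVec_sub_rightInverseStep hAB,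
      ← Function.iterate_succ_apply' (rightInverseStep B N) (k + 1)]
    refine mulVec_apply_mem _ (fun j => ?_) i
    rw [← neg_sub]
    exact neg_mem (Ideal.pow_le_pow_right (Nat.le_succ _)
      (iterate_succ_rightInverseStep_sub_mem hΔ (k + 1) j))

end RightInverse

section Jets

variable {σ R : Type*} [CommRing R]

/-- Precomposition with `Φ`, on `(k - 1)`-jets. The order is reversed:
`jetSubst k Ψ _ * jetSubst k Φ _` is precomposition with `Φ ∘ Ψ`, i.e. with `aeval Ψ ∘ Φ`. -/
noncomputable def jetSubst (k : ℕ) (Φ : σ → MvPolynomial σ R) (hΦ : ∀ i, Φ i ∈ idealOfVars σ R) :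
    (MvPolynomial σ R ⧸ idealOfVars σ R ^ k) →ₐ[R] (MvPolynomial σ R ⧸ idealOfVars σ R ^ k) :=
  Ideal.quotientMapₐ _ (aeval Φ) (pow_idealOfVars_le_comap_aeval hΦ k)

theorem jetSubst_mul_jetSubst_eq_one_iff {k : ℕ} {Φ Ψ : σ → MvPolynomial σ R}
    (hΦ : ∀ i, Φ i ∈ idealOfVars σ R) (hΨ : ∀ i, Ψ i ∈ idealOfVars σ R) :
    jetSubst k Ψ hΨ * jetSubst k Φ hΦ = 1 ↔ ∀ i, aeval Ψ (Φ i) - X i ∈ idealOfVars σ R ^ k := by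
  have hX : ∀ i, (jetSubst k Ψ hΨ * jetSubst k Φ hΦ) (Ideal.Quotient.mk _ (X i))
      = Ideal.Quotient.mk _ (aeval Ψ (Φ i)) := by
    simp [jetSubst]
  simp_rw [← Ideal.Quotient.eq, ← hX]
  constructor
  · intro h i
    rw [h]
    rfl
  · intro h
    refine Ideal.Quotient.algHom_ext R (MvPolynomial.algHom_ext fun i => ?_)
    simpa using h i

end Jets

end MvPolynomial

theorem jet_with_invertible_linear_part_has_inverse_general (d n : ℕ)
    (Δ : Fin n → MvPolynomial (Fin n) ℂ)
    (hΔ0 : ∀ i, constantCoeff (Δ i) = 0)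
    (hΔlin : IsUnit (linearPart Δ)) :
    ∃ Δ' : Fin n → MvPolynomial (Fin n) ℂ,
      (∀ i, constantCoeff (Δ' i) = 0) ∧
      (∀ i, aeval Δ' (Δ i) - X i ∈ varIdeal n ^ (d + 1)) ∧
      (∀ i, aeval Δ (Δ' i) - X i ∈ varIdeal n ^ (d + 1)) := by
  obtain ⟨A, hA⟩ := hΔlin
  have hΔ : HasLinearPart Δ A := by
    rw [hA]
    exact hasLinearPart_of_forall_mem fun i => mem_idealOfVars_iff.mpr (hΔ0 i)
  obtain ⟨Δ', hΔ'lin, hΔ'⟩ := exists_hasLinearPart_aeval_sub_X_mem A.mul_inv hΔ d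
  obtain ⟨Δ'', hΔ''lin, hΔ''⟩ := exists_hasLinearPart_aeval_sub_X_mem A.inv_mul hΔ'lin d
  have hΔm := hΔ.mem_idealOfVars
  have hΔ'm := hΔ'lin.mem_idealOfVars
  have hΔ''m := hΔ''lin.mem_idealOfVars
  refine ⟨Δ', fun i => mem_idealOfVars_iff.mp (hΔ'm i), hΔ', ?_⟩
  rw [← jetSubst_mul_jetSubst_eq_one_iff hΔm hΔ'm] at hΔ'
  rw [← jetSubst_mul_jetSubst_eq_one_iff hΔ'm hΔ''m] at hΔ''
  refine (jetSubst_mul_jetSubst_eq_one_iff hΔ'm hΔm).mp ?_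
  rwa [← left_inv_eq_right_inv hΔ'' hΔ']

/-- Every `d`-jet with invertible linear part has a compositional inverse modulo
terms of degree greater than `d`; hence `Diff_d^n` is a group under truncated
composition. -/
theorem jet_with_invertible_linear_part_has_inverse (d n : ℕ) (hd : 1 ≤ d)
    (Δ : Fin n → MvPolynomial (Fin n) ℂ)
    (hΔ0 : ∀ i, constantCoeff (Δ i) = 0)
    (hΔlin : IsUnit (linearPart Δ)) :
    ∃ Δ' : Fin n → MvPolynomial (Fin n) ℂ,
      (∀ i, constantCoeff (Δ' i) = 0) ∧
      (∀ i, aeval Δ' (Δ i) - X i ∈ varIdeal n ^ (d + 1)) ∧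
      (∀ i, aeval Δ (Δ' i) - X i ∈ varIdeal n ^ (d + 1)) :=
  jet_with_invertible_linear_part_has_inverse_general d n Δ hΔ0 hΔlin
end

section
/- Let A be a finite-dimensional commutative non-unital ℂ-algebra that is nilpotent with A^(d+1) = 0 (every product of d+1 elements of A vanishes), and let A² denote the ℂ-linear span of all products a·b with a, b ∈ A. Let n be a natural number with n ≥ dim_ℂ(A / A²). Then there exists k₀ such that for every k ≥ k₀ there exists a tuple f : Fin k → MvPolynomial (Fin n) ℂ of polynomials with zero constant coefficient such that A is isomorphic, as a non-unital ℂ-algebra, to the local algebra A_Ψ = m_n / (Ideal.span (Set.range f) ⊔ m_n^(d+1)), i.e. to the non-unital algebra of elements with zero constant term in the quotient ring MvPolynomial (Fin n) ℂ / (Ideal.span (Set.range f) ⊔ m_n^(d+1)). In other words, the contact singularity Θ_A^{n,k} ⊆ J_d^{n,k} is non-empty for n ≥ dim(A/A²) and k sufficiently large. -/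
open MvPolynomial

/-- The local algebra associated to a tuple `f` of polynomials with zero constant
coefficient: the non-unital subalgebra of elements with zero constant term (the
non-unital subalgebra generated by the images of the variables) in the quotient ring
`MvPolynomial (Fin n) ℂ ⧸ (Ideal.span (Set.range f) ⊔ m_n ^ (d + 1))`. -/
noncomputable def localAlgebra {n k : ℕ} (d : ℕ) (f : Fin k → MvPolynomial (Fin n) ℂ) :
    NonUnitalSubalgebra ℂ
      (MvPolynomial (Fin n) ℂ ⧸ (Ideal.span (Set.range f) ⊔ varIdeal n ^ (d + 1))) :=
  NonUnitalAlgebra.adjoin ℂ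
    (Set.range fun i =>
      Ideal.Quotient.mk (Ideal.span (Set.range f) ⊔ varIdeal n ^ (d + 1)) (X i))

/-!
Lift a basis of `A / A²` to `g : Fin n → A` (padding with zeros) and evaluate `X i ↦ g i`
into the unitization `ℂ ⊕ A`. The augmentation ideal of the unitization is nilpotent, so a
graded Nakayama argument shows that the `g i` generate `A` as a non-unital algebra; hence the
evaluation map identifies `m_n` modulo its kernel `J` with `A`. The kernel contains
`m_n ^ (d + 1)` because `A ^ (d + 1) = 0`, and it is finitely generated by Hilbert's basis theorem.
Any tuple generating `J`, padded with zeros to length `k`, thus has local algebra `A`.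
-/

theorem Submodule.exists_fin_span_range_eq_of_le {R M : Type*} [Semiring R] [AddCommMonoid M]
    [Module R M] {m k : ℕ} (s : Fin m → M) (hmk : m ≤ k) :
    ∃ t : Fin k → M, span R (Set.range t) = span R (Set.range s) := by
  refine ⟨fun i => if h : (i : ℕ) < m then s ⟨i, h⟩ else 0, le_antisymm ?_ ?_⟩
  · rw [span_le]
    rintro _ ⟨i, rfl⟩
    dsimp only
    split_ifs
    · exact subset_span ⟨_, rfl⟩
    · exact zero_mem _
  · rw [span_le]
    rintro _ ⟨i, rfl⟩
    exact subset_span ⟨Fin.castLE hmk i, by simp⟩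

theorem Submodule.FG.exists_fin_span_range_eq {R M : Type*} [Semiring R] [AddCommMonoid M]
    [Module R M] {N : Submodule R M} (hN : N.FG) :
    ∃ k₀ : ℕ, ∀ k, k₀ ≤ k → ∃ t : Fin k → M, span R (Set.range t) = N := by
  obtain ⟨m, s, rfl⟩ := fg_iff_exists_fin_generating_family.mp hN
  exact ⟨m, fun k hk => exists_fin_span_range_eq_of_le s hk⟩

theorem Submodule.exists_fin_span_range_sup_eq_top {K V : Type*} [DivisionRing K]
    [AddCommGroup V] [Module K V] (W : Submodule K V) [FiniteDimensional K (V ⧸ W)] {n : ℕ}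
    (hn : Module.finrank K (V ⧸ W) ≤ n) :
    ∃ g : Fin n → V, span K (Set.range g) ⊔ W = ⊤ := by
  let b := Module.finBasis K (V ⧸ W)
  obtain ⟨g, hg⟩ :=
    exists_fin_span_range_eq_of_le (R := K) (Function.surjInv W.mkQ_surjective ∘ b) hn
  refine ⟨g, ?_⟩
  rw [hg, sup_comm, ← map_mkQ_eq_top, map_span, ← Set.range_comp, ← Function.comp_assoc,
    (Function.rightInverse_surjInv W.mkQ_surjective).comp_eq_id, Function.id_comp, b.span_eq]

theorem Ideal.restrictScalars_le_of_isNilpotent_of_le_sup_sq {R U : Type*} [CommSemiring R]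
    [CommRing U] [Algebra R U] {I : Ideal U} {S : NonUnitalSubalgebra R U} (hI : IsNilpotent I)
    (hSI : S.toSubmodule ≤ I.restrictScalars R)
    (h : I.restrictScalars R ≤ S.toSubmodule ⊔ (I ^ 2).restrictScalars R) :
    I.restrictScalars R ≤ S.toSubmodule := by
  have step : ∀ i, (I ^ (i + 1)).restrictScalars R ≤
      (S.toSubmodule ⊓ (I ^ (i + 1)).restrictScalars R) ⊔ (I ^ (i + 2)).restrictScalars R := by
    have h₀ : I.restrictScalars R ≤
        (S.toSubmodule ⊓ I.restrictScalars R) ⊔ (I ^ 2).restrictScalars R := by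
      rwa [inf_eq_left.mpr hSI]
    intro i
    induction i with
    | zero => rwa [pow_one]
    | succ i ih =>
      intro x hx
      rw [Submodule.restrictScalars_mem, pow_succ] at hx
      refine Submodule.mul_induction_on hx (fun y hy z hz => ?_) (fun _ _ => add_mem)
      obtain ⟨y₁, ⟨hy₁S, hy₁I⟩, y₂, hy₂, rfl⟩ := Submodule.mem_sup.mp (ih hy)
      obtain ⟨z₁, ⟨hz₁S, hz₁I⟩, z₂, hz₂, rfl⟩ := Submodule.mem_sup.mp (h₀ hz)
      have h₁₁ : y₁ * z₁ ∈ I ^ (i + 1 + 1) := pow_succ I (i + 1) ▸ Ideal.mul_mem_mul hy₁I hz₁I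
      have h₁₂ : y₁ * z₂ ∈ I ^ (i + 1 + 2) := pow_add I (i + 1) 2 ▸ Ideal.mul_mem_mul hy₁I hz₂
      have h₂ : y₂ * (z₁ + z₂) ∈ I ^ (i + 2 + 1) := pow_succ I (i + 2) ▸ Ideal.mul_mem_mul hy₂ hz
      rw [show (y₁ + y₂) * (z₁ + z₂) = y₁ * z₁ + (y₁ * z₂ + y₂ * (z₁ + z₂)) by ring]
      exact Submodule.add_mem_sup ⟨show y₁ * z₁ ∈ S from mul_mem hy₁S hz₁S, h₁₁⟩ (add_mem h₁₂ h₂)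
  obtain ⟨N, hN⟩ := hI
  have key : ∀ m i, N ≤ i + 1 + m → (I ^ (i + 1)).restrictScalars R ≤ S.toSubmodule := by
    intro m
    induction m with
    | zero =>
      intro i hi
      have : I ^ (i + 1) = ⊥ :=
        le_bot_iff.mp ((Ideal.pow_le_pow_right hi).trans (hN.trans Ideal.zero_eq_bot).le)
      simp [this]
    | succ m ih =>
      intro i hi
      exact (step i).trans (sup_le inf_le_left (ih (i + 1) (by omega)))
  simpa using key N 0 (by omega)

theorem NonUnitalAlgHom.exists_linearEquiv_map_mul_of_range_eq {R A B C : Type*}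
    [CommSemiring R] [NonUnitalNonAssocSemiring A] [Module R A] [NonUnitalNonAssocSemiring B]
    [Module R B] [NonUnitalNonAssocSemiring C] [Module R C] (φ : A →ₙₐ[R] C) (ψ : B →ₙₐ[R] C)
    (hφ : Function.Injective φ) (hψ : Function.Injective ψ)
    (h : NonUnitalAlgHom.range φ = NonUnitalAlgHom.range ψ) :
    ∃ e : A ≃ₗ[R] B, ∀ x y : A, e (x * y) = e x * e y := by
  have h' : LinearMap.range (φ : A →ₗ[R] C) = LinearMap.range (ψ : B →ₗ[R] C) := by
    ext z
    exact SetLike.ext_iff.mp h z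
  let e : A ≃ₗ[R] B := (LinearEquiv.ofInjective _ hφ).trans
    ((LinearEquiv.ofEq _ _ h').trans (LinearEquiv.ofInjective _ hψ).symm)
  have he : ∀ x, ψ (e x) = φ x := fun x =>
    LinearEquiv.ofInjective_symm_apply (f := (ψ : B →ₗ[R] C)) (h := hψ) _
  exact ⟨e, fun x y => hψ (by rw [map_mul ψ, he, he, he, map_mul φ])⟩

namespace Unitization

variable {R A : Type*} [CommRing R] [NonUnitalCommRing A] [Module R A] [SMulCommClass R A A]
  [IsScalarTower R A A]

theorem inr_snd_of_mem_ker_fstHom {x : Unitization R A} (hx : x ∈ RingHom.ker (fstHom R A)) :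
    (x.snd : Unitization R A) = x :=
  Unitization.ext (by rw [fst_inr]; exact hx.symm) (snd_inr R x.snd)

theorem inr_mul_prod_map_inr (a : A) (l : List A) :
    (a : Unitization R A) * (l.map (↑)).prod = ↑(l.foldl (· * ·) a) := by
  induction l generalizing a with
  | nil => simp
  | cons b l ih => rw [List.map_cons, List.prod_cons, ← mul_assoc, ← inr_mul, ih, List.foldl_cons]

theorem ker_fstHom_pow_eq_bot {d : ℕ}
    (hnil : ∀ (a : A) (l : List A), l.length = d → l.foldl (· * ·) a = 0) :
    RingHom.ker (fstHom R A) ^ (d + 1) = ⊥ := by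
  rw [Submodule.pow_eq_span_pow_set, Submodule.span_eq_bot]
  rintro _ hx
  obtain ⟨x, rfl⟩ := Set.mem_pow.mp hx
  have hx : ∀ i, ((x i : Unitization R A).snd : Unitization R A) = x i :=
    fun i => inr_snd_of_mem_ker_fstHom (x i).2
  have htail : (List.ofFn fun i : Fin d => (x i.succ : Unitization R A)) =
      (List.ofFn fun i => (x i.succ : Unitization R A).snd).map (↑) := by
    rw [List.map_ofFn]
    exact congrArg List.ofFn (funext fun i => (hx i.succ).symm)
  rw [List.ofFn_succ, List.prod_cons, ← hx 0, htail, inr_mul_prod_map_inr,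
    hnil _ _ (List.length_ofFn), inr_zero]

theorem ker_fstHom_le_adjoin_sup_sq {s : Set A}
    (hs : Submodule.span R s ⊔ Submodule.span R {x : A | ∃ a b : A, x = a * b} = ⊤) :
    (RingHom.ker (fstHom R A)).restrictScalars R ≤
      (NonUnitalAlgebra.adjoin R ((↑) '' s : Set (Unitization R A))).toSubmodule ⊔
        (RingHom.ker (fstHom R A) ^ 2).restrictScalars R := by
  intro x hx
  obtain ⟨y, hy, z, hz, hyz⟩ := Submodule.mem_sup.mp (hs ▸ Submodule.mem_top : x.snd ∈ _)
  rw [← inr_snd_of_mem_ker_fstHom hx, ← hyz, inr_add]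
  refine Submodule.add_mem_sup ?_ ?_
  · have := Submodule.mem_map_of_mem (f := inrHom R R A) hy
    rw [Submodule.map_span] at this
    exact Submodule.span_le.mpr (NonUnitalAlgebra.subset_adjoin R) this
  · have := Submodule.mem_map_of_mem (f := inrHom R R A) hz
    rw [Submodule.map_span] at this
    refine Submodule.span_le.mpr ?_ this
    rintro _ ⟨_, ⟨a, b, rfl⟩, rfl⟩
    rw [inrHom_apply, inr_mul, pow_two]
    exact Ideal.mul_mem_mul (fst_inr R a) (fst_inr R b)

theorem adjoin_inr_image_eq_range {d : ℕ}
    (hnil : ∀ (a : A) (l : List A), l.length = d → l.foldl (· * ·) a = 0) {s : Set A}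
    (hs : Submodule.span R s ⊔ Submodule.span R {x : A | ∃ a b : A, x = a * b} = ⊤) :
    NonUnitalAlgebra.adjoin R ((↑) '' s : Set (Unitization R A)) =
      NonUnitalAlgHom.range (inrNonUnitalAlgHom R A) := by
  have hrange : (NonUnitalAlgHom.range (inrNonUnitalAlgHom R A)).toSubmodule =
      (RingHom.ker (fstHom R A)).restrictScalars R := by
    ext x
    exact ⟨fun ⟨a, ha⟩ => ha ▸ fst_inr R a, fun hx => ⟨x.snd, inr_snd_of_mem_ker_fstHom hx⟩⟩
  have hle :
      NonUnitalAlgebra.adjoin R ((↑) '' s) ≤ NonUnitalAlgHom.range (inrNonUnitalAlgHom R A) :=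
    NonUnitalAlgebra.adjoin_le (by rintro _ ⟨a, -, rfl⟩; exact ⟨a, rfl⟩)
  have hnilp : IsNilpotent (RingHom.ker (fstHom R A)) :=
    ⟨d + 1, by rw [ker_fstHom_pow_eq_bot hnil, Ideal.zero_eq_bot]⟩
  refine le_antisymm hle fun x hx => ?_
  rw [← NonUnitalSubalgebra.mem_toSubmodule, hrange] at hx
  exact Ideal.restrictScalars_le_of_isNilpotent_of_le_sup_sq hnilp (hrange ▸ hle)
    (ker_fstHom_le_adjoin_sup_sq hs) hx

theorem fst_aeval_inr {σ : Type*} (g : σ → A) (p : MvPolynomial σ R) :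
    (aeval (fun i => (g i : Unitization R A)) p).fst = constantCoeff p := by
  have : (fstHom R A).comp (aeval fun i => (g i : Unitization R A)) = aeval 0 :=
    MvPolynomial.algHom_ext fun i => by simp
  simpa using DFunLike.congr_fun this p

end Unitization

theorem varIdeal_pow_le_ker_aeval_inr {A : Type} [NonUnitalCommRing A] [Module ℂ A]
    [SMulCommClass ℂ A A] [IsScalarTower ℂ A A] {d n : ℕ}
    (hnil : ∀ (a : A) (l : List A), l.length = d → l.foldl (· * ·) a = 0) (g : Fin n → A) :
    varIdeal n ^ (d + 1) ≤ RingHom.ker (aeval fun i => (g i : Unitization ℂ A)) := by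
  rw [← Ideal.map_eq_bot_iff_le_ker, Ideal.map_pow, ← le_bot_iff,
    ← Unitization.ker_fstHom_pow_eq_bot (R := ℂ) hnil]
  refine Ideal.pow_right_mono ?_ (d + 1)
  rw [varIdeal, Ideal.map_span, Ideal.span_le]
  rintro _ ⟨_, ⟨i, rfl⟩, rfl⟩
  simp

theorem exists_linearEquiv_localAlgebra {A : Type} [NonUnitalCommRing A] [Module ℂ A]
    [SMulCommClass ℂ A A] [IsScalarTower ℂ A A] {n k d : ℕ} {f : Fin k → MvPolynomial (Fin n) ℂ}
    {g : Fin n → A}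
    (hker : Ideal.span (Set.range f) ⊔ varIdeal n ^ (d + 1) =
      RingHom.ker (aeval fun i => (g i : Unitization ℂ A)))
    (hadj : NonUnitalAlgebra.adjoin ℂ ((↑) '' Set.range g : Set (Unitization ℂ A)) =
      NonUnitalAlgHom.range (Unitization.inrNonUnitalAlgHom ℂ A)) :
    ∃ e : A ≃ₗ[ℂ] localAlgebra d f, ∀ x y : A, e (x * y) = e x * e y := by
  let Φbar := Ideal.Quotient.liftₐ (Ideal.span (Set.range f) ⊔ varIdeal n ^ (d + 1))
    (aeval fun i => (g i : Unitization ℂ A)) fun p hp => by rwa [hker] at hp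
  have hinj : Function.Injective Φbar := (Ideal.injective_lift_iff _).mpr hker.symm
  refine NonUnitalAlgHom.exists_linearEquiv_map_mul_of_range_eq
    (Unitization.inrNonUnitalAlgHom ℂ A)
    ((Φbar : _ →ₙₐ[ℂ] Unitization ℂ A).comp (NonUnitalSubalgebraClass.subtype _))
    Unitization.inr_injective (by exact hinj.comp Subtype.val_injective) ?_
  rw [NonUnitalAlgHom.range_comp, NonUnitalSubalgebra.range_val, localAlgebra,
    NonUnitalAlgHom.map_adjoin, ← hadj, ← Set.range_comp, ← Set.range_comp]
  congr 2
  funext i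
  exact (aeval_X _ i).symm

/-- If `A` is a finite-dimensional commutative nilpotent non-unital `ℂ`-algebra with
`A ^ (d + 1) = 0` and `n ≥ dim_ℂ (A / A²)`, then for all sufficiently large `k` there
is a map-jet in `J_d^{n,k}` whose local algebra is isomorphic to `A` as a non-unital
`ℂ`-algebra: the contact singularity `Θ_A^{n,k}` is non-empty. -/
theorem contact_singularity_nonempty (d : ℕ) (A : Type) [NonUnitalCommRing A]
    [Module ℂ A] [SMulCommClass ℂ A A] [IsScalarTower ℂ A A] [FiniteDimensional ℂ A]
    (hnil : ∀ (a : A) (l : List A), l.length = d → l.foldl (· * ·) a = 0)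
    (n : ℕ)
    (hn : Module.finrank ℂ
        (A ⧸ Submodule.span ℂ {x : A | ∃ a b : A, x = a * b}) ≤ n) :
    ∃ k₀ : ℕ, ∀ k, k₀ ≤ k →
      ∃ f : Fin k → MvPolynomial (Fin n) ℂ,
        (∀ i, constantCoeff (f i) = 0) ∧
        ∃ e : A ≃ₗ[ℂ] localAlgebra (n := n) d f,
          ∀ x y : A, e (x * y) = e x * e y := by
  obtain ⟨g, hg⟩ := Submodule.exists_fin_span_range_sup_eq_top _ hn
  let Φ : MvPolynomial (Fin n) ℂ →ₐ[ℂ] Unitization ℂ A := aeval fun i => (g i : Unitization ℂ A)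
  obtain ⟨k₀, hk₀⟩ := (IsNoetherian.noetherian (RingHom.ker Φ)).exists_fin_span_range_eq
  refine ⟨k₀, fun k hk => ?_⟩
  obtain ⟨f, hf⟩ := hk₀ k hk
  have hfΦ : Ideal.span (Set.range f) = RingHom.ker Φ := hf
  have hker : Ideal.span (Set.range f) ⊔ varIdeal n ^ (d + 1) = RingHom.ker Φ := by
    rw [hfΦ, sup_eq_left]
    exact varIdeal_pow_le_ker_aeval_inr hnil g
  refine ⟨f, fun i => ?_, exists_linearEquiv_localAlgebra hker
    (Unitization.adjoin_inr_image_eq_range hnil hg)⟩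
  have hfi : f i ∈ RingHom.ker Φ := hfΦ ▸ Ideal.subset_span ⟨i, rfl⟩
  rw [← Unitization.fst_aeval_inr g, RingHom.mem_ker.mp hfi, Unitization.fst_zero]
end
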